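/- Let X be a real Banach space and Y a closed subspace of X. Suppose there exists a closed subspace V ≠ {0} of X with Y ∩ V = {0} such that ‖y‖ ≤ ‖y + v‖ for all y ∈ Y and v ∈ V (i.e. the natural projection from Y + V onto Y has norm 1). Then there exists a weak*-closed subspace Z of X* that is norm-attaining for Y and satisfies V ⊆ Z^⊤ (in particular Z^⊤ ≠ {0}) and Z^⊤ ∩ (Y + V) = V. If moreover Y + V = X, then Y^⊥ ∩ Z = {0}. -/

import Mathlib

/-!
Take `Z = V^⊥`. Since `V` is closed, `Z^⊤ = V`, which gives every property of `Z^⊤`. The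
hypothesis on the projection says exactly that `dist(y, V) = ‖y‖` for `y ∈ Y`, and Hahn–Banach in
`X ⧸ V` yields a functional of norm at most one vanishing on `V` with `f y = dist(y, V)`; for a unit
vector `y` this functional has norm one and attains it at `y`.
-/

/-- A subspace `Z` of the dual of `X` is **weak*-closed** if its image in `WeakDual ℝ X`
is closed in the weak-* topology. -/
def WeakStarClosed {X : Type*} [NormedAddCommGroup X] [NormedSpace ℝ X]
    (Z : Submodule ℝ (X →L[ℝ] ℝ)) : Prop :=
  IsClosed (StrongDual.toWeakDual '' (Z : Set (X →L[ℝ] ℝ)) : Set (WeakDual ℝ X))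

/-- `Z ⊆ X*` is **norm-attaining for** the subspace `Y ⊆ X` if every norm-one element of `Y`
is sent to `1` by some norm-one functional in `Z`. -/
def NormAttainingFor {X : Type*} [NormedAddCommGroup X] [NormedSpace ℝ X]
    (Y : Submodule ℝ X) (Z : Submodule ℝ (X →L[ℝ] ℝ)) : Prop :=
  ∀ y ∈ Y, ‖y‖ = 1 → ∃ f ∈ Z, ‖f‖ = 1 ∧ f y = 1

/-- The **pre-annihilator** `Z^⊤` of a subspace `Z` of the dual of `X`. -/
def preAnn {X : Type*} [NormedAddCommGroup X] [NormedSpace ℝ X]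
    (Z : Submodule ℝ (X →L[ℝ] ℝ)) : Submodule ℝ X where
  carrier := {x | ∀ f ∈ Z, f x = 0}
  add_mem' := by intro a b ha hb f hf; simp [ha f hf, hb f hf]
  zero_mem' := by intro f hf; simp
  smul_mem' := by intro c x hx f hf; simp [hx f hf]

section Annihilator

open Metric

variable {X : Type*} [NormedAddCommGroup X] [NormedSpace ℝ X]

/-- `V^⊥ ⊆ X*`. -/
def ann (V : Submodule ℝ X) : Submodule ℝ (X →L[ℝ] ℝ) where
  carrier := {f | ∀ v ∈ V, f v = 0}
  add_mem' hf hg v hv := by simp [hf v hv, hg v hv]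
  zero_mem' _ _ := rfl
  smul_mem' c f hf v hv := by simp [hf v hv]

theorem mem_ann {V : Submodule ℝ X} {f : X →L[ℝ] ℝ} : f ∈ ann V ↔ ∀ v ∈ V, f v = 0 :=
  Iff.rfl

theorem weakStarClosed_ann (V : Submodule ℝ X) : WeakStarClosed (ann V) := by
  have himage : StrongDual.toWeakDual '' (ann V : Set (X →L[ℝ] ℝ)) =
      ⋂ v ∈ (V : Set X), {g : WeakDual ℝ X | g v = 0} := by
    ext g
    simp only [Set.mem_image, Set.mem_iInter, Set.mem_ofPred_eq, SetLike.mem_coe, mem_ann]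
    exact ⟨by rintro ⟨f, hf, rfl⟩; exact hf, fun hg => ⟨StrongDual.toWeakDual.symm g, hg, by simp⟩⟩
  rw [WeakStarClosed, himage]
  exact isClosed_biInter fun v _ => isClosed_eq (WeakDual.eval_continuous v) continuous_const

theorem le_preAnn_ann (V : Submodule ℝ X) : V ≤ preAnn (ann V) :=
  fun v hv _ hf => hf v hv

/-- Hahn–Banach applied in the quotient `X ⧸ V`, which need not be Hausdorff. -/
theorem exists_mem_ann_norm_le_one_apply_eq_infDist (V : Submodule ℝ X) (x : X) :
    ∃ f ∈ ann V, ‖f‖ ≤ 1 ∧ f x = infDist x V := by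
  obtain ⟨g, hg, hgx⟩ := exists_dual_vector'' ℝ (V.mkQ x)
  refine ⟨g.comp V.mkQL, fun v hv => ?_, ?_, ?_⟩
  · simp [(Submodule.Quotient.mk_eq_zero V).mpr hv]
  · refine ContinuousLinearMap.opNorm_le_bound _ zero_le_one fun y => ?_
    calc ‖g (V.mkQ y)‖ ≤ ‖g‖ * ‖V.mkQ y‖ := g.le_opNorm _
      _ ≤ 1 * ‖y‖ := mul_le_mul hg (Submodule.Quotient.norm_mk_le V y) (norm_nonneg _) zero_le_one
  · exact hgx.trans (QuotientAddGroup.norm_mk x)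

theorem preAnn_ann {V : Submodule ℝ X} (hV : IsClosed (V : Set X)) : preAnn (ann V) = V := by
  refine le_antisymm (fun x hx => ?_) (le_preAnn_ann V)
  obtain ⟨f, hfV, -, hfx⟩ := exists_mem_ann_norm_le_one_apply_eq_infDist V x
  rw [← SetLike.mem_coe, ← hV.closure_eq, mem_closure_iff_infDist_zero ⟨0, V.zero_mem⟩, ← hfx]
  exact hx f hfV

theorem infDist_eq_norm_of_forall_norm_le_norm_add {V : Submodule ℝ X} {y : X}
    (hy : ∀ v ∈ V, ‖y‖ ≤ ‖y + v‖) : infDist y V = ‖y‖ := by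
  refine le_antisymm ?_ ((le_infDist ⟨0, V.zero_mem⟩).mpr fun v hv => ?_)
  · simpa using infDist_le_dist_of_mem (x := y) V.zero_mem
  · simpa [dist_eq_norm, sub_eq_add_neg] using hy (-v) (V.neg_mem hv)

theorem normAttainingFor_ann {Y V : Submodule ℝ X} (hproj : ∀ y ∈ Y, ∀ v ∈ V, ‖y‖ ≤ ‖y + v‖) :
    NormAttainingFor Y (ann V) := by
  intro y hy hy1
  obtain ⟨f, hfV, hf, hfy⟩ := exists_mem_ann_norm_le_one_apply_eq_infDist V y
  rw [infDist_eq_norm_of_forall_norm_le_norm_add (hproj y hy), hy1] at hfy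
  refine ⟨f, hfV, le_antisymm hf ?_, hfy⟩
  simpa [hfy, hy1] using f.le_opNorm y

theorem ContinuousLinearMap.eq_zero_of_sup_eq_top {Y V : Submodule ℝ X} (hYV : Y ⊔ V = ⊤)
    {f : X →L[ℝ] ℝ} (hY : ∀ y ∈ Y, f y = 0) (hV : ∀ v ∈ V, f v = 0) : f = 0 := by
  ext x
  obtain ⟨y, hy, v, hv, rfl⟩ := Submodule.mem_sup.mp (hYV ▸ Submodule.mem_top : x ∈ Y ⊔ V)
  simp [hY y hy, hV v hv]

end Annihilator

theorem exists_normAttainingFor_of_norm_one_projection (X : Type*) [NormedAddCommGroup X]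
    [NormedSpace ℝ X] (Y : Submodule ℝ X)
    (V : Submodule ℝ X) (hVc : IsClosed (V : Set X)) (hV0 : V ≠ ⊥)
    (hproj : ∀ y ∈ Y, ∀ v ∈ V, ‖y‖ ≤ ‖y + v‖) :
    ∃ Z : Submodule ℝ (X →L[ℝ] ℝ), WeakStarClosed Z ∧ NormAttainingFor Y Z ∧
      V ≤ preAnn Z ∧ preAnn Z ≠ ⊥ ∧ preAnn Z ⊓ (Y ⊔ V) = V ∧
      (Y ⊔ V = ⊤ → ∀ f ∈ Z, (∀ y ∈ Y, f y = 0) → f = 0) := by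
  refine ⟨ann V, weakStarClosed_ann V, normAttainingFor_ann hproj, le_preAnn_ann V, ?_, ?_,
    fun hYV f hfV hfY => ContinuousLinearMap.eq_zero_of_sup_eq_top hYV hfY hfV⟩
  · rwa [preAnn_ann hVc]
  · rw [preAnn_ann hVc]
    exact inf_eq_left.mpr le_sup_right
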